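/- For every nonnegative integer n, 8∫_0^2 π_{2n+1}(x)·(∫_0^x π_{2n}(u) du) dx = 2(1 − (2n+2)²/s²), where π_{2n}(z) = ((4n+3)/16)·C_{2n}^{(3/2)}(z/2) and π_{2n+1}(z) = (1 − (2n+1)²/s²)·C_{2n+1}^{(1/2)}(z/2) − s^{-2}·C_{2n+1}^{(3/2)}(z/2), and s is any nonzero real parameter. -/

import Mathlib

open Finset Real intervalIntegral

/-- The Gegenbauer (ultraspherical) polynomial `C_m^{(α)}`, via its explicit
expansion `C_m^{(α)}(x) = ∑_{k=0}^{⌊m/2⌋} (-1)^k Γ(m-k+α)/(Γ(α) k! (m-2k)!) (2x)^{m-2k}`. -/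
noncomputable def geg (α : ℝ) (m : ℕ) (x : ℝ) : ℝ :=
  ∑ k ∈ Finset.range (m / 2 + 1),
    (-1) ^ k * Real.Gamma ((m : ℝ) - k + α) /
      (Real.Gamma α * (Nat.factorial k) * (Nat.factorial (m - 2 * k))) *
        (2 * x) ^ (m - 2 * k)

/-- The even skew-orthogonal polynomial `π_{2n}(z) = ((4n+3)/16) C_{2n}^{(3/2)}(z/2)`. -/
noncomputable def piEven (n : ℕ) (z : ℝ) : ℝ :=
  ((4 * (n : ℝ) + 3) / 16) * geg (3/2) (2 * n) (z / 2)

/-- The odd skew-orthogonal polynomial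
`π_{2n+1}(z) = (1-(2n+1)²/s²) C_{2n+1}^{(1/2)}(z/2) - s⁻² C_{2n+1}^{(3/2)}(z/2)`. -/
noncomputable def piOdd (s : ℝ) (n : ℕ) (z : ℝ) : ℝ :=
  (1 - (2 * (n : ℝ) + 1) ^ 2 / s ^ 2) * geg (1/2) (2 * n + 1) (z / 2) -
    s⁻¹ ^ 2 * geg (3/2) (2 * n + 1) (z / 2)

/-- `I_n = 8 ∫_0^2 π_{2n+1}(x) (∫_0^x π_{2n}(u) du) dx`. -/
noncomputable def In (s : ℝ) (n : ℕ) : ℝ :=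
  8 * ∫ x in (0 : ℝ)..2, piOdd s n x * ∫ u in (0 : ℝ)..x, piEven n u

/-!
Since `d/dx C_{m+1}^{(1/2)} = C_m^{(3/2)}`, the inner integral is `(4n+3)/8 · P(x/2)` with
`P = C_{2n+1}^{(1/2)}` the Legendre polynomial. Substituting `x = 2t` and using that the
integrand is even, `I_n` becomes a combination of `∫_{-1}^1 P²` and `∫_{-1}^1 C_{2n+1}^{(3/2)} P`.
By Rodrigues' formula `P_m = D^m (x² - 1)^m / (2^m m!)` and `m` integrations by parts,
`∫_{-1}^1 f P_m` only sees the coefficient of `x^m` in a polynomial `f` of degree `≤ m`; the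
leading coefficients of `C_m^{(3/2)}` and `C_m^{(1/2)}` differ by the factor `2m + 1`, so the two
integrals are `2/(2m+1)` and `2`.
-/

open Polynomial
open scoped Nat

noncomputable def gegPoly (α : ℝ) (m : ℕ) : ℝ[X] :=
  ∑ k ∈ range (m / 2 + 1),
    C ((-1) ^ k * Gamma ((m : ℝ) - k + α) / (Gamma α * k ! * (m - 2 * k)!) * 2 ^ (m - 2 * k)) *
      X ^ (m - 2 * k)

theorem eval_gegPoly (α : ℝ) (m : ℕ) (x : ℝ) : (gegPoly α m).eval x = geg α m x := by
  simp only [gegPoly, geg, eval_finsetSum, eval_mul, eval_C, eval_pow, eval_X, mul_pow]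
  exact sum_congr rfl fun k _ => by ring

theorem continuous_geg (α : ℝ) (m : ℕ) : Continuous (geg α m) :=
  (gegPoly α m).continuous.congr (eval_gegPoly α m)

theorem natDegree_gegPoly_le (α : ℝ) (m : ℕ) : (gegPoly α m).natDegree ≤ m :=
  natDegree_sum_le_of_forall_le _ _ fun k _ =>
    (natDegree_C_mul_le _ _).trans (by rw [natDegree_X_pow]; omega)

theorem coeff_gegPoly_self (α : ℝ) (m : ℕ) :
    (gegPoly α m).coeff m = Gamma (m + α) / (Gamma α * m !) * 2 ^ m := by
  rw [gegPoly, finsetSum_coeff, sum_eq_single 0]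
  · rw [Nat.mul_zero, Nat.sub_zero, coeff_C_mul, coeff_X_pow_self, mul_one]
    simp
  · intro k hk hk0
    rw [coeff_C_mul, coeff_X_pow, if_neg (by grind), mul_zero]
  · simp

theorem coeff_gegPoly_add_one_self {α : ℝ} (hα : 0 < α) (m : ℕ) :
    (gegPoly (α + 1) m).coeff m = (m + α) / α * (gegPoly α m).coeff m := by
  have hΓ := (Gamma_pos_of_pos hα).ne'
  rw [coeff_gegPoly_self, coeff_gegPoly_self, ← add_assoc, Gamma_add_one (by positivity),
    Gamma_add_one hα.ne']
  field_simp

theorem geg_neg (α : ℝ) (m : ℕ) (x : ℝ) : geg α m (-x) = (-1) ^ m * geg α m x := by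
  rw [geg, geg, mul_sum]
  refine sum_congr rfl fun k hk => ?_
  have hsign : (-1 : ℝ) ^ m = (-1) ^ (m - 2 * k) := by
    rw [← Nat.sub_add_cancel (show 2 * k ≤ m by grind), pow_add, pow_mul]
    norm_num
  rw [hsign, mul_neg, neg_pow (2 * x)]
  ring

theorem geg_two_mul_add_one_zero (α : ℝ) (n : ℕ) : geg α (2 * n + 1) 0 = 0 := by
  have h := geg_neg α (2 * n + 1) 0
  rw [neg_zero, pow_succ, pow_mul] at h
  norm_num at h
  linarith

theorem derivative_gegPoly_succ {α : ℝ} (hα : α ≠ 0) (m : ℕ) :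
    derivative (gegPoly α (m + 1)) = C (2 * α) * gegPoly (α + 1) m := by
  rw [gegPoly, gegPoly, derivative_sum, mul_sum]
  simp only [derivative_C_mul_X_pow]
  refine (sum_subset (range_subset_range.mpr (by omega)) ?_).symm.trans (sum_congr rfl ?_)
  · intro k hk hk'
    simp only [mem_range] at hk hk'
    rw [show m + 1 - 2 * k = 0 by omega]
    simp
  · intro k hk
    simp only [mem_range] at hk
    have hΓ : Gamma (α + 1) = α * Gamma α := Gamma_add_one hα
    rw [show m + 1 - 2 * k - 1 = m - 2 * k by omega, ← mul_assoc, ← C_mul]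
    congr 2
    rw [show ((m + 1 : ℕ) : ℝ) - k + α = m - k + (α + 1) by push_cast; ring,
      show m + 1 - 2 * k = m - 2 * k + 1 by omega, Nat.factorial_succ, pow_succ, hΓ]
    have hj : ((m - 2 * k : ℕ) : ℝ) + 1 ≠ 0 := by positivity
    push_cast
    -- `Γ` vanishes at nonpositive integers, where both sides are `0` by `x / 0 = 0`
    by_cases hΓ0 : Gamma α = 0
    · simp [hΓ0]
    field_simp

theorem hasDerivAt_geg_succ {α : ℝ} (hα : α ≠ 0) (m : ℕ) (x : ℝ) :
    HasDerivAt (geg α (m + 1)) (2 * α * geg (α + 1) m x) x := by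
  simpa only [derivative_gegPoly_succ hα, eval_mul, eval_C, eval_gegPoly] using
    (gegPoly α (m + 1)).hasDerivAt x

theorem integral_piEven (n : ℕ) (x : ℝ) :
    ∫ u in (0 : ℝ)..x, piEven n u = (4 * n + 3) / 8 * geg (1 / 2) (2 * n + 1) (x / 2) := by
  have hderiv : ∀ u, HasDerivAt (fun u => (4 * n + 3) / 8 * geg (1 / 2) (2 * n + 1) (u / 2))
      (piEven n u) u := by
    intro u
    have h := ((hasDerivAt_geg_succ (α := 1 / 2) (by norm_num) (2 * n) (u / 2)).comp u
      ((hasDerivAt_id u).div_const 2)).const_mul ((4 * n + 3) / 8 : ℝ)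
    refine h.congr_deriv ?_
    rw [piEven]
    norm_num
    ring
  have hcont : Continuous (piEven n) :=
    ((continuous_geg _ _).comp (continuous_id.div_const 2)).const_mul _
  rw [integral_eq_sub_of_hasDerivAt (fun u _ => hderiv u) (hcont.intervalIntegrable _ _)]
  simp [geg_two_mul_add_one_zero]

theorem integral_eval_mul_derivative_eval {a b : ℝ} (f g : ℝ[X]) (ha : g.eval a = 0)
    (hb : g.eval b = 0) :
    ∫ t in a..b, f.eval t * (derivative g).eval t =
      -∫ t in a..b, (derivative f).eval t * g.eval t := by
  rw [integral_mul_deriv_eq_deriv_mul (fun x _ => f.hasDerivAt x) (fun x _ => g.hasDerivAt x)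
    (f.derivative.continuous.intervalIntegrable _ _)
    (g.derivative.continuous.intervalIntegrable _ _), ha, hb]
  ring

theorem integral_eval_mul_iterate_derivative_eval {a b : ℝ} (f g : ℝ[X]) (m : ℕ)
    (ha : ∀ j < m, (derivative^[j] g).eval a = 0)
    (hb : ∀ j < m, (derivative^[j] g).eval b = 0) :
    ∫ t in a..b, f.eval t * (derivative^[m] g).eval t =
      (-1) ^ m * ∫ t in a..b, (derivative^[m] f).eval t * g.eval t := by
  induction m generalizing g with
  | zero => simp
  | succ m ih =>
    rw [Function.iterate_succ_apply,
      ih (derivative g) (fun j hj => ha (j + 1) (by omega)) (fun j hj => hb (j + 1) (by omega)),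
      integral_eval_mul_derivative_eval _ g (ha 0 m.succ_pos) (hb 0 m.succ_pos),
      Function.iterate_succ_apply']
    ring

theorem iterate_derivative_sq_sub_one_pow_eval {m j : ℕ} (hj : j < m) {x : ℝ} (hx : x ^ 2 = 1) :
    (derivative^[j] ((X ^ 2 - 1 : ℝ[X]) ^ m)).eval x = 0 := by
  obtain ⟨q, hq⟩ := pow_sub_dvd_iterate_derivative_pow (X ^ 2 - 1 : ℝ[X]) m j
  rw [hq, eval_mul, eval_pow]
  simp [hx, Nat.sub_ne_zero_of_lt hj]

theorem integral_sq_sub_one_pow (m : ℕ) :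
    ∫ t in (-1 : ℝ)..1, (t ^ 2 - 1) ^ m =
      (-1) ^ m * (2 * 4 ^ m * (m ! : ℝ) ^ 2 / ((2 * m + 1)! : ℝ)) := by
  induction m with
  | zero => norm_num
  | succ m ih =>
    -- with `K_j = ∫_{-1}^1 (t² - 1)^j`, parts on `t · D (t² - 1)^(m+1)` give
    -- `2(m+1) (K_{m+1} + K_m) = -K_{m+1}`
    have hparts := integral_eval_mul_derivative_eval (a := -1) (b := 1) X
      ((X ^ 2 - 1 : ℝ[X]) ^ (m + 1)) (by norm_num) (by norm_num)
    have hcont : ∀ k : ℕ, Continuous fun t : ℝ => (t ^ 2 - 1) ^ k := fun k => by fun_prop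
    have hintegrand : ∀ t : ℝ,
        (X : ℝ[X]).eval t * (derivative ((X ^ 2 - 1 : ℝ[X]) ^ (m + 1))).eval t =
          2 * (m + 1) * ((t ^ 2 - 1) ^ (m + 1) + (t ^ 2 - 1) ^ m) := by
      intro t
      rw [derivative_pow, derivative_sub, derivative_X_pow, derivative_one]
      simp only [eval_mul, eval_C, eval_pow, eval_sub, eval_X, eval_one, eval_zero,
        Nat.add_sub_cancel]
      push_cast
      ring
    rw [integral_congr (fun t _ => hintegrand t)] at hparts
    simp only [derivative_X, eval_one, one_mul, eval_pow, eval_sub, eval_X] at hparts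
    rw [integral_const_mul, integral_add ((hcont _).intervalIntegrable _ _)
      ((hcont _).intervalIntegrable _ _), ih] at hparts
    have hK : ∫ t in (-1 : ℝ)..1, (t ^ 2 - 1) ^ (m + 1) = -(2 * (m + 1)) / (2 * m + 3) *
        ((-1) ^ m * (2 * 4 ^ m * (m ! : ℝ) ^ 2 / ((2 * m + 1)! : ℝ))) := by
      rw [div_mul_eq_mul_div, eq_div_iff (by positivity)]
      linear_combination hparts
    rw [hK, show 2 * (m + 1) + 1 = (2 * m + 1) + 1 + 1 by ring, Nat.factorial_succ (2 * m + 1 + 1),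
      Nat.factorial_succ (2 * m + 1), Nat.factorial_succ m]
    push_cast
    field_simp
    ring

theorem Gamma_nat_add_half_eq_factorial (n : ℕ) :
    Gamma (n + 1 / 2) = √π * (2 * n)! / (4 ^ n * n !) := by
  induction n with
  | zero => simpa using Gamma_one_half_eq
  | succ n ih =>
    rw [Nat.cast_succ, add_right_comm, Gamma_add_one (by positivity), ih,
      show 2 * (n + 1) = 2 * n + 1 + 1 by ring, Nat.factorial_succ (2 * n + 1),
      Nat.factorial_succ (2 * n), Nat.factorial_succ n]
    push_cast
    field_simp
    ring

theorem sq_sub_one_pow_eq_sum (m : ℕ) :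
    (X ^ 2 - 1 : ℝ[X]) ^ m =
      ∑ k ∈ range (m + 1), C ((-1 : ℝ) ^ k * m.choose k) * X ^ (2 * (m - k)) := by
  rw [sub_eq_neg_add, add_pow]
  refine sum_congr rfl fun k _ => ?_
  simp only [map_mul, map_pow, map_neg, map_one, map_natCast, ← pow_mul]
  ring

theorem geg_one_half_eq_rodrigues (m : ℕ) (x : ℝ) :
    geg (1 / 2) m x = (derivative^[m] ((X ^ 2 - 1 : ℝ[X]) ^ m)).eval x / (2 ^ m * m !) := by
  simp only [sq_sub_one_pow_eq_sum, iterate_derivative_sum, iterate_derivative_C_mul,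
    iterate_derivative_X_pow_eq_C_mul, eval_finsetSum, eval_mul, eval_C, eval_pow, eval_X, sum_div]
  rw [← sum_subset (range_subset_range.mpr (show m / 2 + 1 ≤ m + 1 by omega)), geg]
  · refine sum_congr rfl fun k hk => ?_
    have hkm : 2 * k ≤ m := by grind
    have hdesc : ((m - 2 * k)! : ℝ) * (2 * (m - k)).descFactorial m = (2 * (m - k))! := by
      have h := Nat.factorial_mul_descFactorial (show m ≤ 2 * (m - k) by omega)
      rw [show 2 * (m - k) - m = m - 2 * k by omega] at h
      exact_mod_cast h
    have hpow : (4 : ℝ) ^ (m - k) = 2 ^ m * 2 ^ (m - 2 * k) := by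
      rw [show (4 : ℝ) = 2 ^ 2 by norm_num, ← pow_mul, ← pow_add]
      congr 1
      omega
    rw [show (m : ℝ) - k = ((m - k : ℕ) : ℝ) by push_cast [show k ≤ m by omega]; ring,
      Gamma_nat_add_half_eq_factorial, Gamma_one_half_eq,
      Nat.cast_choose ℝ (show k ≤ m by omega),
      show 2 * (m - k) - m = m - 2 * k by omega, ← hdesc, hpow, mul_pow]
    field_simp
  · intro k hk hk'
    simp only [mem_range] at hk hk'
    rw [Nat.descFactorial_eq_zero_iff_lt.mpr (by omega)]
    simp

theorem iterate_derivative_eq_C_of_natDegree_le {f : ℝ[X]} {m : ℕ} (hf : f.natDegree ≤ m) :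
    derivative^[m] f = C (m ! * f.coeff m) := by
  have h0 : (derivative^[m] f).natDegree ≤ 0 :=
    (natDegree_iterate_derivative f m).trans (by omega)
  rw [eq_C_of_natDegree_le_zero h0, coeff_iterate_derivative]
  simp [Nat.descFactorial_self, nsmul_eq_mul]

theorem integral_eval_mul_geg_one_half {f : ℝ[X]} {m : ℕ} (hf : f.natDegree ≤ m) :
    ∫ t in (-1 : ℝ)..1, f.eval t * geg (1 / 2) m t =
      f.coeff m * (2 ^ (m + 1) * (m ! : ℝ) ^ 2 / ((2 * m + 1)! : ℝ)) := by
  simp_rw [geg_one_half_eq_rodrigues, mul_div_assoc']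
  rw [intervalIntegral.integral_div, integral_eval_mul_iterate_derivative_eval _ _ m
    (fun j hj => iterate_derivative_sq_sub_one_pow_eval hj (by norm_num))
    (fun j hj => iterate_derivative_sq_sub_one_pow_eval hj (by norm_num)),
    iterate_derivative_eq_C_of_natDegree_le hf]
  simp only [eval_C, eval_pow, eval_sub, eval_X, eval_one]
  have hsign : (-1 : ℝ) ^ m * (-1) ^ m = 1 := by rw [← mul_pow]; norm_num
  rw [integral_const_mul, integral_sq_sub_one_pow, pow_succ,
    show (4 : ℝ) ^ m = 2 ^ m * 2 ^ m by rw [← mul_pow]; norm_num]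
  field_simp
  linear_combination (f.coeff m * 2 ^ m * 2) * hsign

theorem integral_geg_one_half_sq (m : ℕ) :
    ∫ t in (-1 : ℝ)..1, geg (1 / 2) m t * geg (1 / 2) m t = 2 / (2 * m + 1) := by
  have h := integral_eval_mul_geg_one_half (natDegree_gegPoly_le (1 / 2) m)
  simp only [eval_gegPoly] at h
  rw [h, coeff_gegPoly_self, Gamma_nat_add_half_eq_factorial, Gamma_one_half_eq,
    Nat.factorial_succ, show (4 : ℝ) ^ m = 2 ^ m * 2 ^ m by rw [← mul_pow]; norm_num]
  push_cast
  field_simp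
  ring

theorem integral_geg_three_halves_mul_geg_one_half (m : ℕ) :
    ∫ t in (-1 : ℝ)..1, geg (3 / 2) m t * geg (1 / 2) m t = 2 := by
  have h := integral_eval_mul_geg_one_half (natDegree_gegPoly_le (1 / 2 + 1) m)
  have h' := integral_eval_mul_geg_one_half (natDegree_gegPoly_le (1 / 2) m)
  simp only [eval_gegPoly] at h h'
  rw [show (3 / 2 : ℝ) = 1 / 2 + 1 by norm_num, h, coeff_gegPoly_add_one_self (by norm_num),
    mul_assoc, ← h', integral_geg_one_half_sq]
  field_simp

theorem integral_neg_to_self_eq_two_mul_of_even {f : ℝ → ℝ} (hf : Continuous f)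
    (heven : Function.Even f) (a : ℝ) :
    ∫ x in -a..a, f x = 2 * ∫ x in 0..a, f x := by
  have hleft : ∫ x in -a..0, f x = ∫ x in 0..a, f x := by
    have h := integral_comp_neg (a := 0) (b := a) f
    rw [neg_zero] at h
    rw [← h]
    exact integral_congr fun x _ => heven x
  rw [← integral_add_adjacent_intervals (b := 0) (hf.intervalIntegrable _ _)
    (hf.intervalIntegrable _ _), hleft]
  ring

theorem integral_zero_one_geg_mul_geg (α β : ℝ) (m : ℕ) :
    ∫ t in (0 : ℝ)..1, geg α m t * geg β m t =
      (∫ t in (-1 : ℝ)..1, geg α m t * geg β m t) / 2 := by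
  have heven : Function.Even fun t => geg α m t * geg β m t := fun x => by
    dsimp only
    rw [geg_neg, geg_neg, mul_mul_mul_comm, ← mul_pow]
    norm_num
  rw [integral_neg_to_self_eq_two_mul_of_even (f := fun t => geg α m t * geg β m t)
    ((continuous_geg α m).mul (continuous_geg β m))
    heven]
  ring

theorem In_eval_general (n : ℕ) (s : ℝ) :
    In s n = 2 * (1 - (2 * (n : ℝ) + 2) ^ 2 / s ^ 2) := by
  have hPP : ∫ t in (0 : ℝ)..1, geg (1 / 2) (2 * n + 1) t * geg (1 / 2) (2 * n + 1) t =
      1 / (4 * n + 3) := by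
    rw [integral_zero_one_geg_mul_geg, integral_geg_one_half_sq]
    push_cast
    ring
  have hQP : ∫ t in (0 : ℝ)..1, geg (3 / 2) (2 * n + 1) t * geg (1 / 2) (2 * n + 1) t = 1 := by
    rw [integral_zero_one_geg_mul_geg, integral_geg_three_halves_mul_geg_one_half]
    norm_num
  have hsubst : ∫ x in (0 : ℝ)..2, piOdd s n x * ∫ u in (0 : ℝ)..x, piEven n u =
      2 * ∫ t in (0 : ℝ)..1, (4 * n + 3) / 8 *
        ((1 - (2 * n + 1) ^ 2 / s ^ 2) * (geg (1 / 2) (2 * n + 1) t * geg (1 / 2) (2 * n + 1) t) -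
          s⁻¹ ^ 2 * (geg (3 / 2) (2 * n + 1) t * geg (1 / 2) (2 * n + 1) t)) := by
    have hscale (f : ℝ → ℝ) : ∫ x in (0 : ℝ)..2, f (x / 2) = 2 * ∫ t in (0 : ℝ)..1, f t := by
      simp
    rw [← hscale]
    exact integral_congr fun x _ => by simp only [integral_piEven, piOdd]; ring
  have hcont : ∀ α, Continuous fun t => geg α (2 * n + 1) t * geg (1 / 2) (2 * n + 1) t :=
    fun α => (continuous_geg _ _).mul (continuous_geg _ _)
  rw [In, hsubst, integral_const_mul,
    integral_sub (((hcont _).const_mul _).intervalIntegrable _ _)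
      (((hcont _).const_mul _).intervalIntegrable _ _),
    integral_const_mul, integral_const_mul, hPP, hQP]
  field_simp
  ring

theorem In_eval (n : ℕ) (s : ℝ) (hs : s ≠ 0) :
    In s n = 2 * (1 - (2 * (n : ℝ) + 2) ^ 2 / s ^ 2) :=
  In_eval_general n s
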